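/- Let Y be a finite abelian group and let μ̂_1,…,μ̂_n (n ≥ 2) be nonnegative-valued characteristic functions on Y satisfying Π_{i=1}^n μ̂_i(Σ_{j=1}^n β_{ij} u_j) = Π_{i,j} μ̂_i(β_{ij} u_j) for all u_j ∈ Y, with β_{ij} ∈ Aut(Y), β_{1j} = β_{i1} = Id. Then either F_{μ_i} = {0} for all i, or F_{μ_i} ≠ {0} for all i and there exists a nonzero subgroup H of Y with H ⊆ ∩_{i=1}^n F_{μ_i} and β_{ij}(H) = H for all i,j. -/

import Mathlib

/-- A probability distribution on a finite set, given by its mass function. -/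
def IsDist {X : Type*} [Fintype X] (μ : X → ℝ) : Prop :=
  (∀ x, 0 ≤ μ x) ∧ ∑ x, μ x = 1

/-- The characteristic function `μ̂(y) = ∑_x (x,y) μ({x})` of a distribution `μ`
on a finite abelian group `X`, where `y` is a character of `X`. -/
noncomputable def charFun {X : Type*} [AddCommGroup X] [Fintype X]
    (μ : X → ℝ) (y : AddChar X ℂ) : ℂ :=
  ∑ x, (μ x : ℂ) * y x

/-- The Haar (uniform) distribution `m_K` on a subgroup `K` of `X`. -/
noncomputable def haarDist {X : Type*} [AddCommGroup X] [Fintype X]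
    (K : AddSubgroup X) : X → ℝ :=
  (K : Set X).indicator fun _ => ((Nat.card K : ℝ))⁻¹

/-- The degenerate distribution `E_{x₀}` concentrated at `x₀`. -/
def diracDist {X : Type*} [DecidableEq X] (x₀ : X) : X → ℝ :=
  fun x => if x = x₀ then 1 else 0

/-- Convolution of two distributions on a finite abelian group. -/
noncomputable def convDist {X : Type*} [AddCommGroup X] [Fintype X]
    (μ ν : X → ℝ) : X → ℝ :=
  fun x => ∑ t, μ t * ν (x - t)

/-- `μ` is an idempotent distribution: a shift of the Haar distribution on a subgroup. -/
noncomputable def IsIdempotent {X : Type*} [AddCommGroup X] [Fintype X] [DecidableEq X]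
    (μ : X → ℝ) : Prop :=
  ∃ (K : AddSubgroup X) (x₀ : X), μ = convDist (haarDist K) (diracDist x₀)

/-- The linear forms `L_j = ∑_i A i j (ξ i)`, `j = 1,…,k`, of independent random
variables `ξ i` with distributions `μ i` are independent: the joint distribution of
`(L_1, …, L_k)` equals the product of the marginal distributions. -/
def FormsIndep {X : Type*} [AddCommGroup X] [Fintype X] [DecidableEq X] {n k : ℕ}
    (μ : Fin n → X → ℝ) (A : Fin n → Fin k → X → X) : Prop :=
  ∀ x : Fin k → X,
    (∑ t : Fin n → X, if (∀ j, ∑ i, A i j (t i) = x j) then ∏ i, μ i (t i) else 0) =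
    ∏ j, ∑ t : Fin n → X, if (∑ i, A i j (t i) = x j) then ∏ i, μ i (t i) else 0

/-- The adjoint `α̃` of an endomorphism `α` of `X`, acting on the character group:
`(α x, y) = (x, α̃ y)`. -/
noncomputable def adjChar {X : Type*} [AddCommGroup X] (α : X →+ X)
    (y : AddChar X ℂ) : AddChar X ℂ :=
  y.compAddMonoidHom α

/-!
Write `Fᵢ = F_{μᵢ}`; it is the group of characters trivial on the support of `μᵢ`. Since
`0 ≤ μ̂ᵢ ≤ 1`, a product of values of the `μ̂ᵢ` equals one iff every factor does, so the
functional equation says that the preimage of `∏ᵢ Fᵢ` under `B : u ↦ (∏ⱼ βᵢⱼ uⱼ)ᵢ` is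
`∏ⱼ F'ⱼ` with `F'ⱼ = ⋂ᵢ βᵢⱼ⁻¹(Fᵢ)`. Comparing indices in `Yⁿ` forces `F'ⱼ = βᵢⱼ⁻¹(Fᵢ)` for all
`i, j`. The normalization `β₁ⱼ = βᵢ₁ = Id` then makes every `Fᵢ` equal to `F₁` and `F₁`
invariant under every `βᵢⱼ`, so `H = F₁` works unless it is trivial.
-/

theorem Finset.prod_eq_one_iff_of_nonneg_of_le_one {ι R : Type*} [CommSemiring R]
    [PartialOrder R] [IsOrderedRing R] {s : Finset ι} {f : ι → R}
    (h0 : ∀ i ∈ s, 0 ≤ f i) (h1 : ∀ i ∈ s, f i ≤ 1) :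
    ∏ i ∈ s, f i = 1 ↔ ∀ i ∈ s, f i = 1 := by
  classical
  refine ⟨fun hp k hk => le_antisymm (h1 k hk) ?_, Finset.prod_eq_one⟩
  calc 1 = f k * ∏ i ∈ s.erase k, f i := by rw [Finset.mul_prod_erase s f hk, hp]
    _ ≤ f k * 1 := by
        gcongr
        · exact h0 k hk
        · exact Finset.prod_le_one (fun i hi => h0 i (Finset.mem_of_mem_erase hi))
            fun i hi => h1 i (Finset.mem_of_mem_erase hi)
    _ = f k := mul_one _

theorem Subgroup.eq_of_le_of_index_eq {G : Type*} [Group G] {H K : Subgroup G} (hle : H ≤ K)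
    (h : H.index = K.index) (hK : K.index ≠ 0) : H = K := by
  refine le_antisymm hle (Subgroup.relIndex_eq_one.mp ?_)
  have := Subgroup.relIndex_mul_index hle
  rw [h] at this
  exact (mul_eq_right₀ hK).mp this

section AutMatrix

variable {Y ι : Type*} [CommGroup Y] [Fintype ι]

def autMatrixHom (β : ι → ι → Y ≃* Y) : (ι → Y) →* (ι → Y) where
  toFun u i := ∏ j, β i j (u j)
  map_one' := by funext i; simp
  map_mul' u v := by funext i; simp [Finset.prod_mul_distrib]

theorem autMatrixHom_apply (β : ι → ι → Y ≃* Y) (u : ι → Y) (i : ι) :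
    autMatrixHom β u i = ∏ j, β i j (u j) := rfl

theorem comap_autMatrixHom_pi_eq_of_prod_eq {R : Type*} [CommSemiring R] [PartialOrder R]
    [IsOrderedRing R] (φ : ι → Y → R) (F : ι → Subgroup Y) (hF : ∀ i y, y ∈ F i ↔ φ i y = 1)
    (h0 : ∀ i y, 0 ≤ φ i y) (h1 : ∀ i y, φ i y ≤ 1) (β : ι → ι → Y ≃* Y)
    (heq : ∀ u : ι → Y, ∏ i, φ i (∏ j, β i j (u j)) = ∏ i, ∏ j, φ i (β i j (u j))) :
    (Subgroup.pi Set.univ F).comap (autMatrixHom β) =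
      Subgroup.pi Set.univ fun j => ⨅ i, (F i).comap (β i j).toMonoidHom := by
  ext u
  have hrow : ∀ i, ∏ j, φ i (β i j (u j)) = 1 ↔ ∀ j, φ i (β i j (u j)) = 1 := fun i => by
    simpa using Finset.prod_eq_one_iff_of_nonneg_of_le_one (s := Finset.univ)
      (f := fun j => φ i (β i j (u j))) (fun j _ => h0 i _) (fun j _ => h1 i _)
  have hrows : ∏ i, ∏ j, φ i (β i j (u j)) = 1 ↔ ∀ i, ∏ j, φ i (β i j (u j)) = 1 := by
    simpa using Finset.prod_eq_one_iff_of_nonneg_of_le_one (s := Finset.univ)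
      (f := fun i => ∏ j, φ i (β i j (u j)))
      (fun i _ => Finset.prod_nonneg fun j _ => h0 i _)
      (fun i _ => Finset.prod_le_one (fun j _ => h0 i _) fun j _ => h1 i _)
  have hlhs : ∏ i, φ i (∏ j, β i j (u j)) = 1 ↔ ∀ i, φ i (∏ j, β i j (u j)) = 1 := by
    simpa using Finset.prod_eq_one_iff_of_nonneg_of_le_one (s := Finset.univ)
      (f := fun i => φ i (∏ j, β i j (u j))) (fun i _ => h0 i _) (fun i _ => h1 i _)
  simp only [Subgroup.mem_comap, Subgroup.mem_pi, Set.mem_univ, true_implies,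
    Subgroup.mem_iInf, autMatrixHom_apply, MulEquiv.coe_toMonoidHom, hF]
  rw [← hlhs, heq, hrows]
  simp only [hrow]
  exact forall_comm

theorem comap_eq_iInf_comap_of_comap_autMatrixHom_pi_eq (F : ι → Subgroup Y)
    (hF : ∀ i, (F i).index ≠ 0) (β : ι → ι → Y ≃* Y)
    (h : (Subgroup.pi Set.univ F).comap (autMatrixHom β) =
      Subgroup.pi Set.univ fun j => ⨅ i, (F i).comap (β i j).toMonoidHom) (i j : ι) :
    (F i).comap (β i j).toMonoidHom = ⨅ i', (F i').comap (β i' j).toMonoidHom := by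
  set F' : ι → Subgroup Y := fun j => ⨅ i, (F i).comap (β i j).toMonoidHom
  have hle : ∀ i j, F' j ≤ (F i).comap (β i j).toMonoidHom := fun i j => iInf_le _ i
  have hcomap : ∀ i j, ((F i).comap (β i j).toMonoidHom).index = (F i).index :=
    fun i j => Subgroup.index_comap_of_surjective _ (β i j).surjective
  -- The index of the left side of `h` divides `∏ [Y : Fᵢ]`, that of the right side is
  -- `∏ rⱼ [Y : Fⱼ]` with `rⱼ = [βⱼⱼ⁻¹(Fⱼ) : F'ⱼ]`; hence all `rⱼ = 1`.
  have hdvd : ∏ j, (F' j).index ∣ ∏ j, (F j).index := by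
    rw [← Subgroup.index_pi, ← Subgroup.index_pi, ← h, Subgroup.index_comap]
    exact Subgroup.relIndex_dvd_index_of_normal _ _
  have hmul : ∀ j,
      (F' j).index = (F' j).relIndex ((F j).comap (β j j).toMonoidHom) * (F j).index := fun j => by
    rw [← hcomap j j, Subgroup.relIndex_mul_index (hle j j)]
  have hdiag : ∀ j, (F' j).index = (F j).index := by
    have hP : ∏ j, (F j).index ≠ 0 := Finset.prod_ne_zero_iff.mpr fun j _ => hF j
    have hr : ∏ j, (F' j).relIndex ((F j).comap (β j j).toMonoidHom) = 1 := by
      simp only [hmul, Finset.prod_mul_distrib] at hdvd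
      exact Nat.dvd_one.mp ((Nat.mul_dvd_mul_iff_right (Nat.pos_of_ne_zero hP)).mp
        (by rwa [one_mul]))
    intro j
    rw [hmul j, Finset.prod_eq_one_iff.mp hr j (Finset.mem_univ j), one_mul]
  have hindex : ∀ i j, (F i).index ∣ (F j).index := fun i j => by
    rw [← hdiag j, ← hcomap i j]
    exact Subgroup.index_dvd_of_le (hle i j)
  refine (Subgroup.eq_of_le_of_index_eq (hle i j) ?_ (by rw [hcomap]; exact hF i)).symm
  rw [hdiag, hcomap, Nat.dvd_antisymm (hindex i j) (hindex j i)]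

end AutMatrix

theorem eq_and_map_eq_of_comap_eq_iInf_comap {Y ι : Type*} [Group Y] (F : ι → Subgroup Y)
    (β : ι → ι → Y ≃* Y) (i₀ : ι) (hβ1 : ∀ j, β i₀ j = MulEquiv.refl Y)
    (hβ2 : ∀ i, β i i₀ = MulEquiv.refl Y)
    (h : ∀ i j, (F i).comap (β i j).toMonoidHom = ⨅ i', (F i').comap (β i' j).toMonoidHom) :
    (∀ i, F i = F i₀) ∧ ∀ i j, (F i₀).map (β i j).toMonoidHom = F i₀ := by
  have hrefl : ∀ K : Subgroup Y, K.comap (MulEquiv.refl Y).toMonoidHom = K := fun K => by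
    ext; simp
  have hF : ∀ i, F i = F i₀ := fun i => by
    simpa only [hβ2, hrefl] using (h i i₀).trans (h i₀ i₀).symm
  have hcomap : ∀ i j, (F i₀).comap (β i j).toMonoidHom = F i₀ := fun i j => by
    simpa only [hβ1, hrefl, ← hF i] using (h i j).trans (h i₀ j).symm
  refine ⟨hF, fun i j => ?_⟩
  conv_lhs => rw [← hcomap i j]
  exact Subgroup.map_comap_eq_self_of_surjective (β i j).surjective _

open scoped ComplexOrder

theorem Complex.le_one_of_nonneg_of_norm_le_one {z : ℂ} (h0 : 0 ≤ z) (h1 : ‖z‖ ≤ 1) :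
    z ≤ 1 := by
  rw [Complex.eq_coe_norm_of_nonneg h0]
  exact_mod_cast h1

theorem Complex.eq_one_of_re_eq_one_of_norm_eq_one {z : ℂ} (hre : z.re = 1) (hnorm : ‖z‖ = 1) :
    z = 1 := by
  rw [Complex.eq_coe_norm_of_nonneg (Complex.re_eq_norm.mp (hre.trans hnorm.symm)), hnorm,
    Complex.ofReal_one]

section CharFun

variable {X : Type*} [AddCommGroup X]

def charAnnihilator (S : Set X) : Subgroup (AddChar X ℂ) where
  carrier := {ψ | ∀ x ∈ S, ψ x = 1}
  one_mem' _ _ := AddChar.one_apply _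
  mul_mem' ha hb x hx := by rw [AddChar.mul_apply, ha x hx, hb x hx, mul_one]
  inv_mem' ha x hx := by rw [AddChar.inv_apply, AddChar.map_neg_eq_inv, ha x hx, inv_one]

theorem mem_charAnnihilator {S : Set X} {ψ : AddChar X ℂ} :
    ψ ∈ charAnnihilator S ↔ ∀ x ∈ S, ψ x = 1 := Iff.rfl

variable [Fintype X] {μ : X → ℝ}

theorem norm_charFun_le_one (hμ : IsDist μ) (ψ : AddChar X ℂ) : ‖charFun μ ψ‖ ≤ 1 :=
  calc ‖charFun μ ψ‖ ≤ ∑ x, ‖(μ x : ℂ) * ψ x‖ := norm_sum_le _ _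
    _ = ∑ x, μ x := by simp [AddChar.norm_apply, abs_of_nonneg (hμ.1 _)]
    _ = 1 := hμ.2

theorem charFun_eq_one_iff (hμ : IsDist μ) (ψ : AddChar X ℂ) :
    charFun μ ψ = 1 ↔ ψ ∈ charAnnihilator (Function.support μ) := by
  rw [mem_charAnnihilator]
  constructor
  · intro h x hx
    -- The real part of `μ̂(ψ) = 1` says `∑ μ x (1 - Re ψ x) = 0`, a sum of nonnegative terms.
    have hsum : ∑ x, μ x * (1 - (ψ x).re) = 0 := by
      have hre := congrArg Complex.re h
      simp only [charFun, Complex.re_sum, Complex.re_ofReal_mul, Complex.one_re] at hre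
      simp [mul_sub, Finset.sum_sub_distrib, hre, hμ.2]
    have hnonneg : ∀ y ∈ Finset.univ, 0 ≤ μ y * (1 - (ψ y).re) := fun y _ =>
      mul_nonneg (hμ.1 y) (sub_nonneg.mpr ((Complex.re_le_norm _).trans_eq (ψ.norm_apply y)))
    have hterm := (Finset.sum_eq_zero_iff_of_nonneg hnonneg).mp hsum x (Finset.mem_univ x)
    have hre : (ψ x).re = 1 := by
      rcases mul_eq_zero.mp hterm with h0 | h0
      · exact absurd h0 hx
      · linarith
    exact Complex.eq_one_of_re_eq_one_of_norm_eq_one hre (ψ.norm_apply x)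
  · intro h
    rw [charFun, ← Complex.ofReal_one, ← hμ.2, Complex.ofReal_sum]
    refine Finset.sum_congr rfl fun x _ => ?_
    by_cases hx : μ x = 0
    · simp [hx]
    · rw [h x hx, mul_one]

end CharFun

open ComplexOrder in
/-- Corollary 1: for a finite abelian group `Y` (here the character
group of `X`) and nonnegative characteristic functions `μ̂_i` satisfying the functional
equation with `β_{1j} = β_{i1} = Id`: either all `F_{μ_i} = {0}`, or all
`F_{μ_i} ≠ {0}` and there is a nonzero subgroup `H ⊆ ∩ F_{μ_i}` with `β_{ij}(H) = H`.
(`Y` is multiplicative, so `{0}` is the trivial subgroup `{1}`.) -/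
theorem stmt7 {X : Type*} [AddCommGroup X] [Fintype X]
    (n : ℕ) (hn : 2 ≤ n)
    (μ : Fin n → X → ℝ) (hμ : ∀ i, IsDist (μ i))
    (hpos : ∀ i y, 0 ≤ charFun (μ i) y)
    (β : Fin n → Fin n → (AddChar X ℂ ≃* AddChar X ℂ))
    (hβ1 : ∀ j, β ⟨0, by omega⟩ j = MulEquiv.refl _)
    (hβ2 : ∀ i, β i ⟨0, by omega⟩ = MulEquiv.refl _)
    (heq : ∀ u : Fin n → AddChar X ℂ,
      ∏ i, charFun (μ i) (∏ j, β i j (u j)) =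
      ∏ i, ∏ j, charFun (μ i) (β i j (u j))) :
    (∀ i, {y : AddChar X ℂ | charFun (μ i) y = 1} = {1}) ∨
    ((∀ i, {y : AddChar X ℂ | charFun (μ i) y = 1} ≠ {1}) ∧
      ∃ H : Subgroup (AddChar X ℂ), H ≠ ⊥ ∧
        (H : Set (AddChar X ℂ)) ⊆ ⋂ i, {y | charFun (μ i) y = 1} ∧
        ∀ i j, H.map (β i j).toMonoidHom = H) := by
  set F : Fin n → Subgroup (AddChar X ℂ) := fun i => charAnnihilator (Function.support (μ i))
  have hmem : ∀ i y, y ∈ F i ↔ charFun (μ i) y = 1 := fun i y =>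
    (charFun_eq_one_iff (hμ i) y).symm
  have hsplit := comap_autMatrixHom_pi_eq_of_prod_eq (fun i => charFun (μ i)) F hmem hpos
    (fun i y => Complex.le_one_of_nonneg_of_norm_le_one (hpos i y) (norm_charFun_le_one (hμ i) y))
    β heq
  obtain ⟨hF, hmap⟩ := eq_and_map_eq_of_comap_eq_iInf_comap F β _ hβ1 hβ2
    (comap_eq_iInf_comap_of_comap_autMatrixHom_pi_eq F
      (fun _ => Subgroup.index_ne_zero_of_finite) β hsplit)
  have hset : ∀ i, {y | charFun (μ i) y = 1} = (F ⟨0, by omega⟩ : Set (AddChar X ℂ)) :=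
    fun i => by rw [← hF i]; exact Set.ext fun y => (hmem i y).symm
  simp only [hset, ← Subgroup.coe_bot, Ne, SetLike.coe_set_eq]
  by_cases hbot : F ⟨0, by omega⟩ = ⊥
  · exact Or.inl fun _ => hbot
  · exact Or.inr ⟨fun _ => hbot, _, hbot, Set.subset_iInter fun _ => subset_rfl, hmap⟩
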